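/- The element a^p is central in B. -/
import Mathlib


noncomputable section

variable (k : Type*) [Field k]

/-- The generator `a` of the free algebra `k⟨a,b⟩`. -/
def aF : FreeAlgebra k (Fin 2) := FreeAlgebra.ι k 0

/-- The generator `b` of the free algebra `k⟨a,b⟩`. -/
def bF : FreeAlgebra k (Fin 2) := FreeAlgebra.ι k 1

/-- The defining relation `ba = ab + (1/2)a²` of `B`. -/
inductive BRel : FreeAlgebra k (Fin 2) → FreeAlgebra k (Fin 2) → Prop
  | rel : BRel (bF k * aF k) (aF k * bF k + (2 : k)⁻¹ • aF k ^ 2)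

/-- The algebra `B = k⟨a,b⟩/(ba − ab − (1/2)a²)`. -/
abbrev B := RingQuot (BRel k)

/-- The image of `a` in `B`. -/
def aB : B k := RingQuot.mkAlgHom k (BRel k) (aF k)

/-- The image of `b` in `B`. -/
def bB : B k := RingQuot.mkAlgHom k (BRel k) (bF k)

lemma bB_mul_aB : bB k * aB k = aB k * bB k + (2 : k)⁻¹ • aB k ^ 2 := by
  have h := RingQuot.mkAlgHom_rel k (BRel.rel (k := k))
  simpa [aB, bB, map_mul, map_add, map_pow, map_smul] using h

lemma bB_mul_aB_pow (n : ℕ) :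
    bB k * aB k ^ n = aB k ^ n * bB k + (n : k) • ((2 : k)⁻¹ • aB k ^ (n + 1)) := by
  induction n with
  | zero => simp
  | succ n ih =>
    have : bB k * aB k ^ (n + 1) = (bB k * aB k ^ n) * aB k := by
      rw [pow_succ, mul_assoc]
    rw [this, ih, add_mul, mul_assoc, bB_mul_aB, smul_mul_assoc, smul_mul_assoc, ← pow_succ, mul_add,
      ← mul_assoc, ← pow_succ, mul_smul_comm, ← pow_add, Nat.cast_succ, add_smul, one_smul]
    abel

/-- The element `a^p` is central in `B`. -/
theorem aB_pow_p_central (p : ℕ) [CharP k p] (hp : 2 < p) :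
    aB k ^ p ∈ Subalgebra.center k (B k) := by
  rw [Subalgebra.mem_center_iff]
  intro y
  obtain ⟨x, rfl⟩ := RingQuot.mkAlgHom_surjective k (BRel k) y
  induction x using FreeAlgebra.induction with
  | grade0 r => simp [Algebra.commutes]
  | grade1 i =>
    fin_cases i
    · exact ((Commute.refl (aB k)).pow_right p).eq
    · show bB k * aB k ^ p = aB k ^ p * bB k
      rw [bB_mul_aB_pow, CharP.cast_eq_zero k p, zero_smul, add_zero]
  | mul x y hx hy => rw [map_mul, mul_assoc, hy, ← mul_assoc, hx, mul_assoc]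
  | add x y hx hy => rw [map_add, add_mul, mul_add, hx, hy]

end
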